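/- Let κ ≥ 1, η > 0, ĉ⁺, c : I → ℝ with c_i^κ ≤ ĉ⁺_i for all i, and let \hat{d} : I → ℝ with \hat{d}_i ≥ η. Define w_i := ĉ⁺_i/\hat{d}_i^κ and g_i := c_i^κ/\hat{d}_i^κ. Then for any two probability vectors ψ*, ψ on I satisfying ⟨w, ψ⟩ ≥ ⟨w, ψ*⟩, it holds that ⟨g, ψ* − ψ⟩ ≤ 2η^{−κ}·∑_{i∈I}(ĉ⁺_i − c_i^κ). -/
import Mathlib


open Finset

/-- Optimism gap bound for the κ-Explorer planning step: with valid upper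
confidence bounds `c i ^ κ ≤ cp i`, occupancies `d̂ i ≥ η`, optimistic weights
`w i = cp i / d̂ i ^ κ` and true gradient `g i = c i ^ κ / d̂ i ^ κ`, if the
probability vector `ψ` satisfies `⟨w, ψ⟩ ≥ ⟨w, ψ*⟩` then
`⟨g, ψ* - ψ⟩ ≤ 2 η^{-κ} ∑ i, (cp i - c i ^ κ)`. -/
theorem stmt19 {I : Type*} [Fintype I] (κ η : ℝ) (hκ : 1 ≤ κ) (hη : 0 < η)
    (c cp : I → ℝ) (hc0 : ∀ i, 0 ≤ c i ^ κ) (hcub : ∀ i, c i ^ κ ≤ cp i)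
    (dh : I → ℝ) (hdh : ∀ i, η ≤ dh i)
    (ψ ψs : I → ℝ) (hψ0 : ∀ i, 0 ≤ ψ i) (hψs0 : ∀ i, 0 ≤ ψs i)
    (hψ1 : ∑ i, ψ i = 1) (hψs1 : ∑ i, ψs i = 1)
    (hopt : ∑ i, (cp i / dh i ^ κ) * ψs i ≤ ∑ i, (cp i / dh i ^ κ) * ψ i) :
    ∑ i, (c i ^ κ / dh i ^ κ) * (ψs i - ψ i)
      ≤ 2 * η ^ (-κ) * ∑ i, (cp i - c i ^ κ) := by
  have hηκ : (0:ℝ) < η ^ κ := Real.rpow_pos_of_pos hη κ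
  have hdκ : ∀ i, (0:ℝ) < dh i ^ κ := fun i =>
    Real.rpow_pos_of_pos (hη.trans_le (hdh i)) κ
  have hleκ : ∀ i, η ^ κ ≤ dh i ^ κ := fun i =>
    Real.rpow_le_rpow hη.le (hdh i) (by linarith)
  have hψle1 : ∀ i, ψ i ≤ 1 := by
    intro i
    rw [← hψ1]
    exact Finset.single_le_sum (fun j _ => hψ0 j) (mem_univ i)
  have hneg : η ^ (-κ) = (η ^ κ)⁻¹ := Real.rpow_neg hη.le κ
  have hS : 0 ≤ ∑ i, (cp i - c i ^ κ) :=
    Finset.sum_nonneg fun i _ => sub_nonneg.2 (hcub i)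
  have h1 : ∑ i, (c i ^ κ / dh i ^ κ) * ψs i ≤ ∑ i, (cp i / dh i ^ κ) * ψs i := by
    refine Finset.sum_le_sum fun i _ => ?_
    exact mul_le_mul_of_nonneg_right
      (by exact div_le_div_of_nonneg_right (hcub i) (hdκ i).le : c i ^ κ / dh i ^ κ ≤ cp i / dh i ^ κ) (hψs0 i)
  have h2 : ∑ i, (cp i / dh i ^ κ) * ψ i - ∑ i, (c i ^ κ / dh i ^ κ) * ψ i
      ≤ ∑ i, (cp i - c i ^ κ) / dh i ^ κ := by
    rw [← Finset.sum_sub_distrib]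
    refine Finset.sum_le_sum fun i _ => ?_
    have : (cp i / dh i ^ κ) * ψ i - (c i ^ κ / dh i ^ κ) * ψ i
        = ((cp i - c i ^ κ) / dh i ^ κ) * ψ i := by ring
    rw [this]
    have hnn : 0 ≤ (cp i - c i ^ κ) / dh i ^ κ :=
      div_nonneg (sub_nonneg.2 (hcub i)) (hdκ i).le
    calc ((cp i - c i ^ κ) / dh i ^ κ) * ψ i
        ≤ ((cp i - c i ^ κ) / dh i ^ κ) * 1 :=
          mul_le_mul_of_nonneg_left (hψle1 i) hnn
      _ = (cp i - c i ^ κ) / dh i ^ κ := by ring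
  have h3 : ∑ i, (cp i - c i ^ κ) / dh i ^ κ
      ≤ η ^ (-κ) * ∑ i, (cp i - c i ^ κ) := by
    rw [hneg, Finset.mul_sum]
    refine Finset.sum_le_sum fun i _ => ?_
    rw [inv_mul_eq_div]
    exact div_le_div_of_nonneg_left (sub_nonneg.2 (hcub i)) hηκ (hleκ i)
  have h4 : η ^ (-κ) * ∑ i, (cp i - c i ^ κ)
      ≤ 2 * η ^ (-κ) * ∑ i, (cp i - c i ^ κ) := by
    have : (0:ℝ) ≤ η ^ (-κ) := by rw [hneg]; positivity
    nlinarith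
  have lhs_eq : ∑ i, (c i ^ κ / dh i ^ κ) * (ψs i - ψ i)
      = ∑ i, (c i ^ κ / dh i ^ κ) * ψs i - ∑ i, (c i ^ κ / dh i ^ κ) * ψ i := by
    rw [← Finset.sum_sub_distrib]
    exact Finset.sum_congr rfl fun i _ => by ring
  rw [lhs_eq]
  linarith [h1, hopt, h2, h3, h4]
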